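/- For n sensors with independent observations T_j ~ Erlang(2λ_T, 2λ_T/μ_j(s,θ)), μ_j = (a_j sin θ + b_j cos θ)/s > 0, the Fisher information for θ satisfies -E[∂² log L / ∂θ²] = 2λ_T · Σ_j ((a_j cos θ - b_j sin θ)/(a_j sin θ + b_j cos θ))². -/

import Mathlib

/-!
With `c = 2λ_T` and `g_j(θ) = a_j sin θ + b_j cos θ`, the `j`-th summand of the log-likelihood is
`ℓ(g_j(θ))` with `ℓ(u) = c log (c s / u) - c s T_j / u + const`. Its second `θ`-derivative
`ℓ''(g_j) g_j'² - ℓ'(g_j) g_j` (using `g_j'' = -g_j`) is affine in `T_j`, so its expectation is its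
value at `T_j = μ_j = g_j / s`. There the score `ℓ'(g_j) = c s T_j / g_j² - c / g_j` vanishes and
`ℓ''(g_j) = -c / g_j²`, leaving `-c g_j'² / g_j²`.
-/

open MeasureTheory Real Filter

lemma hasDerivAt_mul_sin_add_mul_cos (a b w : ℝ) :
    HasDerivAt (fun w => a * sin w + b * cos w) (a * cos w - b * sin w) w :=
  (((hasDerivAt_sin w).const_mul a).fun_add ((hasDerivAt_cos w).const_mul b)).congr_deriv
    (by ring)

lemma hasDerivAt_mul_cos_sub_mul_sin (a b w : ℝ) :
    HasDerivAt (fun w => a * cos w - b * sin w) (-(a * sin w + b * cos w)) w :=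
  (((hasDerivAt_cos w).const_mul a).fun_sub ((hasDerivAt_sin w).const_mul b)).congr_deriv
    (by ring)

section ErlangLogDensity

variable {c s u : ℝ} (t : ℝ)

lemma hasDerivAt_const_div (k : ℝ) (hu : u ≠ 0) :
    HasDerivAt (fun u => k / u) (-k / u ^ 2) u :=
  ((hasDerivAt_const u k).fun_div (hasDerivAt_id' u) hu).congr_deriv (by ring)

lemma hasDerivAt_erlangLogDensity (K K' : ℝ) (hc : c ≠ 0) (hs : s ≠ 0) (hu : u ≠ 0) :
    HasDerivAt (fun u => c * log (c * s / u) + K - c * s * t / u - K')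
      (c * s * t / u ^ 2 - c / u) u :=
  (((((hasDerivAt_const_div (c * s) hu).log (by positivity)).const_mul c).add_const
    K).fun_sub (hasDerivAt_const_div (c * s * t) hu) |>.sub_const K').congr_deriv
    (by field_simp; ring)

lemma hasDerivAt_erlangScore (hu : u ≠ 0) :
    HasDerivAt (fun u => c * s * t / u ^ 2 - c / u) (c / u ^ 2 - 2 * c * s * t / u ^ 3) u :=
  (((hasDerivAt_const u (c * s * t)).fun_div ((hasDerivAt_id' u).fun_pow 2)
    (pow_ne_zero 2 hu)).fun_sub (hasDerivAt_const_div c hu)).congr_deriv (by field_simp; ring)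

end ErlangLogDensity

section LogLikelihood

variable {n : ℕ} (a b : Fin n → ℝ) {c s : ℝ} (t K : Fin n → ℝ) (K' : ℝ)

lemma hasDerivAt_sum_erlangLogDensity (hc : c ≠ 0) (hs : s ≠ 0) {w : ℝ}
    (hw : ∀ j, a j * sin w + b j * cos w ≠ 0) :
    HasDerivAt (fun w => ∑ j, (c * log (c * s / (a j * sin w + b j * cos w)) + K j -
        c * s * t j / (a j * sin w + b j * cos w) - K'))
      (∑ j, (c * s * t j / (a j * sin w + b j * cos w) ^ 2 - c / (a j * sin w + b j * cos w)) *
        (a j * cos w - b j * sin w)) w :=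
  HasDerivAt.fun_sum fun j _ => by
    exact (hasDerivAt_erlangLogDensity (t j) (K j) K' hc hs (hw j)).comp w
      (hasDerivAt_mul_sin_add_mul_cos (a j) (b j) w)

lemma deriv_deriv_sum_erlangLogDensity (hc : c ≠ 0) (hs : s ≠ 0) {θ : ℝ}
    (hθ : ∀ j, a j * sin θ + b j * cos θ ≠ 0) :
    deriv (fun w => deriv (fun w' => ∑ j,
        (c * log (c * s / (a j * sin w' + b j * cos w')) + K j -
          c * s * t j / (a j * sin w' + b j * cos w') - K')) w) θ =
      ∑ j, (c * ((a j * cos θ - b j * sin θ) ^ 2 / (a j * sin θ + b j * cos θ) ^ 2 + 1) +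
        -(c * s * (2 * (a j * cos θ - b j * sin θ) ^ 2 / (a j * sin θ + b j * cos θ) ^ 3 +
          1 / (a j * sin θ + b j * cos θ))) * t j) := by
  have hnear : ∀ᶠ w in nhds θ, ∀ j, a j * sin w + b j * cos w ≠ 0 :=
    eventually_all.2 fun j => ((continuous_const.mul continuous_sin).add
      (continuous_const.mul continuous_cos)).continuousAt.eventually_ne (hθ j)
  rw [Filter.EventuallyEq.deriv_eq (hnear.mono fun w hw =>
    (hasDerivAt_sum_erlangLogDensity a b t K K' hc hs hw).deriv)]
  refine (HasDerivAt.fun_sum fun j _ =>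
    ((hasDerivAt_erlangScore (t j) (hθ j)).comp θ
      (hasDerivAt_mul_sin_add_mul_cos (a j) (b j) θ)).fun_mul
      (hasDerivAt_mul_cos_sub_mul_sin (a j) (b j) θ)).deriv.trans ?_
  refine Finset.sum_congr rfl fun j _ => ?_
  have hg := hθ j
  dsimp only [Function.comp_apply]
  field_simp
  ring

end LogLikelihood

lemma integral_sum_const_add_mul {Ω ι : Type*} [MeasurableSpace Ω] {P : Measure Ω}
    [IsProbabilityMeasure P] (S : Finset ι) {T : ι → Ω → ℝ} (hT : ∀ j, Integrable (T j) P)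
    (α β : ι → ℝ) :
    ∫ ω, ∑ j ∈ S, (α j + β j * T j ω) ∂P = ∑ j ∈ S, (α j + β j * ∫ ω, T j ω ∂P) := by
  have hint j : Integrable (fun ω => α j + β j * T j ω) P :=
    (integrable_const _).add ((hT j).const_mul _)
  rw [integral_finsetSum _ fun j _ => hint j]
  refine Finset.sum_congr rfl fun j _ => ?_
  rw [integral_add (integrable_const _) ((hT j).const_mul _), integral_const, integral_const_mul]
  simp

theorem stmt_14_general {Ω : Type*} [MeasurableSpace Ω] (P : Measure Ω) [IsProbabilityMeasure P]
    (n : ℕ) (θ s : ℝ) (hs : 0 < s)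
    (lT : ℕ) (hlT : 1 ≤ lT)
    (a b : Fin n → ℝ)
    (hdenpos : ∀ j, 0 < a j * Real.sin θ + b j * Real.cos θ)
    (T : Fin n → Ω → ℝ)
    (hmean : ∀ j, (∫ ω, T j ω ∂P) = (a j * Real.sin θ + b j * Real.cos θ) / s) :
    -(∫ ω, deriv (fun w : ℝ => deriv (fun w' : ℝ => ∑ j,
        ((2 * lT : ℝ) * Real.log ((2 * lT : ℝ) * s / (a j * Real.sin w' + b j * Real.cos w')) +
          ((2 * lT : ℝ) - 1) * Real.log (T j ω) -
          (2 * lT : ℝ) * s * T j ω / (a j * Real.sin w' + b j * Real.cos w') -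
          Real.log (Nat.factorial (2 * lT - 1)))) w) θ ∂P) =
      (2 * lT : ℝ) * ∑ j,
        ((a j * Real.cos θ - b j * Real.sin θ) / (a j * Real.sin θ + b j * Real.cos θ)) ^ 2 := by
  have hc : (2 * lT : ℝ) ≠ 0 := by positivity
  have hθ j : a j * sin θ + b j * cos θ ≠ 0 := (hdenpos j).ne'
  have hT j : Integrable (T j) P :=
    Integrable.of_integral_ne_zero (by rw [hmean]; exact div_ne_zero (hθ j) hs.ne')
  have hpointwise ω := deriv_deriv_sum_erlangLogDensity a b (fun j => T j ω)
    (fun j => ((2 * lT : ℝ) - 1) * log (T j ω)) (log (Nat.factorial (2 * lT - 1))) hc hs.ne' hθ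
  simp only [hpointwise, integral_sum_const_add_mul _ hT, hmean, Finset.mul_sum,
    ← Finset.sum_neg_distrib]
  refine Finset.sum_congr rfl fun j _ => ?_
  have hs := hs.ne'
  have hg := hθ j
  generalize a j * sin θ + b j * cos θ = g at hg ⊢
  field_simp
  ring

theorem stmt_14 {Ω : Type*} [MeasurableSpace Ω] (P : Measure Ω) [IsProbabilityMeasure P]
    (n : ℕ) (x y : Fin n → ℝ) (x0 y0 θ s : ℝ) (hs : 0 < s)
    (lT : ℕ) (hlT : 1 ≤ lT)
    (a b : Fin n → ℝ) (ha : ∀ j, a j = x j - x0) (hb : ∀ j, b j = y j - y0)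
    (hdenpos : ∀ j, 0 < a j * Real.sin θ + b j * Real.cos θ)
    (T : Fin n → Ω → ℝ) (hmeas : ∀ j, Measurable (T j)) (hTpos : ∀ j ω, 0 < T j ω)
    (hmean : ∀ j, (∫ ω, T j ω ∂P) = (a j * Real.sin θ + b j * Real.cos θ) / s) :
    -(∫ ω, deriv (fun w : ℝ => deriv (fun w' : ℝ => ∑ j,
        ((2 * lT : ℝ) * Real.log ((2 * lT : ℝ) * s / (a j * Real.sin w' + b j * Real.cos w')) +
          ((2 * lT : ℝ) - 1) * Real.log (T j ω) -
          (2 * lT : ℝ) * s * T j ω / (a j * Real.sin w' + b j * Real.cos w') -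
          Real.log (Nat.factorial (2 * lT - 1)))) w) θ ∂P) =
      (2 * lT : ℝ) * ∑ j,
        ((a j * Real.cos θ - b j * Real.sin θ) / (a j * Real.sin θ + b j * Real.cos θ)) ^ 2 :=
  stmt_14_general P n θ s hs lT hlT a b hdenpos T hmean
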